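/- arXiv:math/0503181 — 2 statements merged into one kernel-verified Lean document; each statement's English description precedes it below -/
import Mathlib

section
/- Suppose a countable measured equivalence relation R on (X, μ) splits as a free product R = R₁ * R₂ of subrelations, and for i = 1, 2 the subrelation R_i is the orbit equivalence relation of an essentially free measure-preserving action of a countable group Γ_i on X. Then the induced action of the free product Γ₁ * Γ₂ on X has orbit equivalence relation R and is essentially free. -/
open MeasureTheory

/-- `R` splits as the free product of the subrelations `R₁` and `R₂`
(with respect to the measure `μ`): `R` is the smallest equivalence relation
containing `R₁` and `R₂`, and for almost every cyclic tuple of points which are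
alternately `R₁`- and `R₂`-equivalent, two consecutive points are equal. -/
def FreeProductRel {X : Type} [MeasurableSpace X] (μ : Measure X)
    (R R₁ R₂ : X → X → Prop) : Prop :=
  (∀ x y, R x y ↔ Relation.EqvGen (fun a b => R₁ a b ∨ R₂ a b) x y) ∧
  ∀ n : ℕ, 0 < n → ∀ᵐ x ∂μ,
    ∀ f : ZMod (2 * n) → X, f 0 = x →
      (∀ j : ZMod (2 * n),
        (Even j → R₁ (f j) (f (j + 1))) ∧ (¬ Even j → R₂ (f j) (f (j + 1)))) →
      ∃ j : ZMod (2 * n), f j = f (j + 1)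

namespace FPFree

variable {X : Type} [MeasurableSpace X] {μ : Measure X}
variable {Γ₁ Γ₂ : Type} [Group Γ₁] [Group Γ₂]
variable (α₁ : Γ₁ →* Equiv.Perm X) (α₂ : Γ₂ →* Equiv.Perm X)

open Monoid Monoid.Coprod List

/-- The "type" (side) of a letter. -/
def ty : Γ₁ ⊕ Γ₂ → Bool := Sum.isLeft

/-- A letter is nontrivial. -/
def ntl : Γ₁ ⊕ Γ₂ → Prop := fun l => l.elim (· ≠ 1) (· ≠ 1)

/-- Interpret a letter in the coproduct. -/
def toC : Γ₁ ⊕ Γ₂ → Monoid.Coprod Γ₁ Γ₂ := fun l => l.elim Monoid.Coprod.inl Monoid.Coprod.inr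

/-- Merge two letters of the same type. -/
def merge : Γ₁ ⊕ Γ₂ → Γ₁ ⊕ Γ₂ → Γ₁ ⊕ Γ₂
  | .inl a, .inl b => .inl (a * b)
  | .inr a, .inr b => .inr (a * b)
  | x, _ => x

/-- Inverse of a letter. -/
def linv : Γ₁ ⊕ Γ₂ → Γ₁ ⊕ Γ₂ := Sum.map (·⁻¹) (·⁻¹)

/-- Product of a word of letters. -/
def wprod (w : List (Γ₁ ⊕ Γ₂)) : Monoid.Coprod Γ₁ Γ₂ := (w.map toC).prod

/-- A word is reduced: all letters nontrivial and types alternate. -/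
def Red (w : List (Γ₁ ⊕ Γ₂)) : Prop :=
  (∀ l ∈ w, ntl l) ∧ w.Chain' (fun a b => ty a ≠ ty b)

lemma toC_one {l : Γ₁ ⊕ Γ₂} (h : ¬ ntl l) : toC l = 1 := by
  cases l with
  | inl a => simp only [ntl, Sum.elim_inl, ne_eq, not_not] at h; simp [toC, h]
  | inr a => simp only [ntl, Sum.elim_inr, ne_eq, not_not] at h; simp [toC, h]

lemma ty_merge (a b : Γ₁ ⊕ Γ₂) : ty (merge a b) = ty a := by
  cases a <;> cases b <;> rfl

lemma toC_merge {a b : Γ₁ ⊕ Γ₂} (h : ty a = ty b) :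
    toC (merge a b) = toC a * toC b := by
  cases a <;> cases b <;> simp [ty] at h ⊢ <;> simp [toC, merge, map_mul]

lemma ty_linv (l : Γ₁ ⊕ Γ₂) : ty (linv l) = ty l := by cases l <;> rfl

lemma ntl_linv {l : Γ₁ ⊕ Γ₂} (h : ntl l) : ntl (linv l) := by
  cases l <;> simpa [ntl, linv] using h

lemma toC_linv (l : Γ₁ ⊕ Γ₂) : toC (linv l) = (toC l)⁻¹ := by
  cases l <;> simp [toC, linv, map_inv]

@[simp] lemma wprod_nil : wprod ([] : List (Γ₁ ⊕ Γ₂)) = 1 := rfl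

@[simp] lemma wprod_cons (l : Γ₁ ⊕ Γ₂) (w : List (Γ₁ ⊕ Γ₂)) :
    wprod (l :: w) = toC l * wprod w := by simp [wprod]

lemma wprod_append (w₁ w₂ : List (Γ₁ ⊕ Γ₂)) :
    wprod (w₁ ++ w₂) = wprod w₁ * wprod w₂ := by simp [wprod]

@[simp] lemma wprod_singleton (l : Γ₁ ⊕ Γ₂) : wprod [l] = toC l := by simp

lemma wprod_reverse_linv (w : List (Γ₁ ⊕ Γ₂)) :
    wprod ((w.map linv).reverse) = (wprod w)⁻¹ := by
  induction w with
  | nil => simp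
  | cons c t ih =>
      simp only [List.map_cons, List.reverse_cons, wprod_append, ih, wprod_cons,
        wprod_singleton, toC_linv, mul_inv_rev, wprod_nil, mul_one]

open scoped Classical in
/-- Prepend a letter to a word, keeping it reduced. -/
noncomputable def consRed : (Γ₁ ⊕ Γ₂) → List (Γ₁ ⊕ Γ₂) → List (Γ₁ ⊕ Γ₂)
  | l, [] => if ntl l then [l] else []
  | l, (l' :: w) =>
      if ty l = ty l' then (if ntl (merge l l') then merge l l' :: w else w)
      else if ntl l then l :: l' :: w else l' :: w

lemma consRed_prod (l : Γ₁ ⊕ Γ₂) (w : List (Γ₁ ⊕ Γ₂)) :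
    wprod (consRed l w) = toC l * wprod w := by
  classical
  cases w with
  | nil =>
      by_cases h : ntl l <;> simp [consRed, h, toC_one]
  | cons l' w =>
      by_cases hty : ty l = ty l'
      · by_cases hm : ntl (merge l l')
        · simp [consRed, hty, hm, toC_merge hty, mul_assoc]
        · have h1 : toC l * toC l' = 1 := by rw [← toC_merge hty, toC_one hm]
          simp [consRed, hty, hm, ← mul_assoc, h1]
      · by_cases hl : ntl l
        · simp [consRed, hty, hl]
        · simp [consRed, hty, hl, toC_one hl]

lemma consRed_red (l : Γ₁ ⊕ Γ₂) {w : List (Γ₁ ⊕ Γ₂)} (hw : Red w) :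
    Red (consRed l w) := by
  classical
  obtain ⟨hn, hc⟩ := hw
  cases w with
  | nil =>
      by_cases h : ntl l
      · simp only [consRed, h, if_true]
        exact ⟨by rintro a ha; rw [List.mem_singleton] at ha; rwa [ha], List.isChain_singleton _⟩
      · simp only [consRed, h, if_false]
        exact ⟨by simp, List.isChain_nil⟩
  | cons l' w =>
      by_cases hty : ty l = ty l'
      · by_cases hm : ntl (merge l l')
        · refine ⟨?_, ?_⟩
          · intro a ha
            simp only [consRed, hty, if_pos, hm, if_true, List.mem_cons] at ha
            rcases ha with rfl | ha
            · exact hm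
            · exact hn a (List.mem_cons_of_mem _ ha)
          · simp only [consRed, hty, if_pos, hm, if_true]
            simp only [List.Chain'] at hc ⊢
            rw [List.isChain_cons] at hc ⊢
            refine ⟨?_, hc.2⟩
            intro y hy
            have := hc.1 y hy
            rw [ty_merge, hty]
            exact this
        · simp only [consRed, hty, if_pos, hm, if_false]
          exact ⟨fun a ha => hn a (List.mem_cons_of_mem _ ha), (List.isChain_cons.mp hc).2⟩
      · by_cases hl : ntl l
        · refine ⟨?_, ?_⟩
          · intro a ha
            simp only [consRed, hty, if_neg, hl, if_true, if_false, List.mem_cons] at ha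
            rcases ha with rfl | rfl | ha
            · exact hl
            · exact hn a (List.mem_cons_self)
            · exact hn a (List.mem_cons_of_mem _ ha)
          · simp only [consRed, hty, if_neg, hl, if_true, if_false]
            exact List.isChain_cons_cons.mpr ⟨hty, hc⟩
        · simpa only [consRed, hty, hl, if_neg, if_false] using ⟨hn, hc⟩

lemma exists_red (g : Monoid.Coprod Γ₁ Γ₂) :
    ∃ w : List (Γ₁ ⊕ Γ₂), Red w ∧ wprod w = g := by
  have key : ∀ h : Monoid.Coprod Γ₁ Γ₂, ∃ w : List (Γ₁ ⊕ Γ₂), wprod w = h := by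
    intro h
    induction h using Monoid.Coprod.induction_on with
    | inl m => exact ⟨[Sum.inl m], by simp [toC]⟩
    | inr n => exact ⟨[Sum.inr n], by simp [toC]⟩
    | mul x y hx hy =>
        obtain ⟨w₁, h₁⟩ := hx
        obtain ⟨w₂, h₂⟩ := hy
        exact ⟨w₁ ++ w₂, by rw [wprod_append, h₁, h₂]⟩
  obtain ⟨w, hw⟩ := key g
  refine ⟨w.foldr consRed [], ?_, ?_⟩
  · clear hw
    induction w with
    | nil => exact ⟨by simp, List.isChain_nil⟩
    | cons c t ih => exact consRed_red c ih
  · rw [← hw]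
    clear hw
    induction w with
    | nil => rfl
    | cons c t ih => rw [List.foldr_cons, consRed_prod, ih, wprod_cons]

omit [Group Γ₁] [Group Γ₂] in
lemma alt_ty {w : List (Γ₁ ⊕ Γ₂)} (hw : w.Chain' (fun a b => ty a ≠ ty b))
    {i : ℕ} (hi : i < w.length) (h0 : 0 < w.length) :
    ty (w[i]'hi) = if Even i then ty (w[0]'h0) else !(ty (w[0]'h0)) := by
  induction i with
  | zero => simp
  | succ k ih =>
      have hk : k < w.length := Nat.lt_of_succ_lt hi
      have hstep : ty (w[k]'hk) ≠ ty (w[k+1]'hi) := by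
        have := List.isChain_iff_getElem.mp hw k (by omega)
        simpa [List.get_eq_getElem] using this
      have h2 : ty (w[k+1]'hi) = !(ty (w[k]'hk)) := by
        cases hty : ty (w[k]'hk) <;> cases hty' : ty (w[k+1]'hi) <;> simp_all
      rw [h2, ih hk]
      by_cases he : Even k
      · have hne : ¬ Even (k+1) := by simpa [Nat.even_add_one] using he
        simp [he, hne]
      · have hev : Even (k+1) := by simpa [Nat.even_add_one] using he
        simp [he, hev]

lemma even_zmod {n : ℕ} (hn : 0 < n) (j : ZMod (2 * n)) :
    Even j ↔ Even j.val := by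
  haveI : NeZero (2 * n) := ⟨by omega⟩
  constructor
  · rintro ⟨r, rfl⟩
    rw [ZMod.val_add]
    have h2 : r.val + r.val = 2 * r.val := by ring
    rw [h2, Nat.mul_mod_mul_left]
    exact ⟨r.val % n, by ring⟩
  · rintro ⟨k, hk⟩
    have hj : ((j.val : ℕ) : ZMod (2*n)) = j := ZMod.natCast_rightInverse j
    rw [← hj, hk]
    push_cast
    exact ⟨(k : ZMod (2*n)), rfl⟩

lemma mp_all (hmp₁ : ∀ g : Γ₁, MeasurePreserving (α₁ g) μ μ)
    (hmp₂ : ∀ g : Γ₂, MeasurePreserving (α₂ g) μ μ) (g : Monoid.Coprod Γ₁ Γ₂) :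
    MeasurePreserving (Monoid.Coprod.lift α₁ α₂ g) μ μ := by
  induction g using Monoid.Coprod.induction_on with
  | inl m => simpa [Monoid.Coprod.lift_apply_inl] using hmp₁ m
  | inr n => simpa [Monoid.Coprod.lift_apply_inr] using hmp₂ n
  | mul x y hx hy =>
      have h : ⇑(Monoid.Coprod.lift α₁ α₂ (x * y)) =
          ⇑(Monoid.Coprod.lift α₁ α₂ x) ∘ ⇑(Monoid.Coprod.lift α₁ α₂ y) := by
        ext z; simp [map_mul, Equiv.Perm.mul_apply]
      rw [h]
      exact hx.comp hy

lemma fix_letter_null (hfree₁ : ∀ g : Γ₁, g ≠ 1 → μ {x | α₁ g x = x} = 0)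
    (hfree₂ : ∀ g : Γ₂, g ≠ 1 → μ {x | α₂ g x = x} = 0)
    {l : Γ₁ ⊕ Γ₂} (hl : ntl l) :
    μ {x | Monoid.Coprod.lift α₁ α₂ (toC l) x = x} = 0 := by
  cases l with
  | inl a => simpa [toC, Monoid.Coprod.lift_apply_inl] using hfree₁ a hl
  | inr a => simpa [toC, Monoid.Coprod.lift_apply_inr] using hfree₂ a hl

lemma free_even {R₁ R₂ : X → X → Prop}
    (horb₁ : ∀ x y, R₁ x y ↔ ∃ g : Γ₁, α₁ g x = y)
    (horb₂ : ∀ x y, R₂ x y ↔ ∃ g : Γ₂, α₂ g x = y)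
    (hmp₁ : ∀ g : Γ₁, MeasurePreserving (α₁ g) μ μ)
    (hmp₂ : ∀ g : Γ₂, MeasurePreserving (α₂ g) μ μ)
    (hfree₁ : ∀ g : Γ₁, g ≠ 1 → μ {x | α₁ g x = x} = 0)
    (hfree₂ : ∀ g : Γ₂, g ≠ 1 → μ {x | α₂ g x = x} = 0)
    {n : ℕ} (hn : 0 < n)
    (hsplit2 : ∀ᵐ x ∂μ,
      ∀ f : ZMod (2 * n) → X, f 0 = x →
        (∀ j : ZMod (2 * n),
          (Even j → R₁ (f j) (f (j + 1))) ∧ (¬ Even j → R₂ (f j) (f (j + 1)))) →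
        ∃ j : ZMod (2 * n), f j = f (j + 1))
    {w : List (Γ₁ ⊕ Γ₂)} (hlen : w.length = 2 * n) (hred : Red w)
    (hhead : ∀ (h : 0 < w.length), ty (w[0]'h) = true) :
    μ {x | Monoid.Coprod.lift α₁ α₂ (wprod w) x = x} = 0 := by
  haveI : NeZero (2 * n) := ⟨by omega⟩
  haveI : Fact (1 < 2 * n) := ⟨by omega⟩
  have h0 : 0 < w.length := by omega
  have hwj : ∀ j : ZMod (2 * n), j.val < w.length := fun j => by
    rw [hlen]; exact ZMod.val_lt j
  set act : Monoid.Coprod Γ₁ Γ₂ → X → X :=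
    fun g => ⇑(Monoid.Coprod.lift α₁ α₂ g) with hact
  set B : Set X := {x | ¬ ∀ f : ZMod (2 * n) → X, f 0 = x →
      (∀ j : ZMod (2 * n),
        (Even j → R₁ (f j) (f (j + 1))) ∧ (¬ Even j → R₂ (f j) (f (j + 1)))) →
      ∃ j : ZMod (2 * n), f j = f (j + 1)} with hB
  have hBnull : μ B = 0 := ae_iff.mp hsplit2
  set N : ZMod (2 * n) → Set X := fun j =>
    (act (wprod (w.drop (j + 1).val))) ⁻¹' {y | act (toC (w[j.val]'(hwj j))) y = y} with hN
  have hNnull : ∀ j, μ (N j) = 0 := by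
    intro j
    have hmp := mp_all α₁ α₂ hmp₁ hmp₂ (wprod (w.drop (j + 1).val))
    refine Measure.preimage_null_of_map_null hmp.measurable.aemeasurable ?_
    rw [hmp.map_eq]
    exact fix_letter_null α₁ α₂ hfree₁ hfree₂ (hred.1 _ (List.getElem_mem _))
  have hsub : {x | act (wprod w) x = x} ⊆ B ∪ ⋃ j, N j := by
    intro x hx
    simp only [Set.mem_setOf_eq] at hx
    by_cases hPx : x ∈ B
    · exact Or.inl hPx
    right
    rw [hB, Set.mem_setOf_eq, not_not] at hPx
    set f : ZMod (2 * n) → X := fun j => act (wprod (w.drop j.val)) x with hf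
    have hfj : ∀ j : ZMod (2 * n), f j = act (wprod (w.drop j.val)) x := fun _ => rfl
    have hf0 : f 0 = x := by
      rw [hfj]
      simp only [ZMod.val_zero, List.drop_zero]
      exact hx
    have hkey : ∀ j : ZMod (2 * n),
        act (toC (w[j.val]'(hwj j))) (f (j + 1)) = f j := by
      intro j
      have hjv := hwj j
      rw [hfj, hfj]
      by_cases hj : j.val + 1 < 2 * n
      · have hsucc : (j + 1).val = j.val + 1 := by
          rw [ZMod.val_add, ZMod.val_one, Nat.mod_eq_of_lt hj]
        have hdrop : w.drop j.val = w[j.val]'(hwj j) :: w.drop (j.val + 1) :=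
          List.drop_eq_getElem_cons (hwj j)
        rw [hsucc, hdrop, wprod_cons]
        simp [hact, map_mul, Equiv.Perm.mul_apply]
      · have hjtop : j.val = 2 * n - 1 := by
          have := ZMod.val_lt j
          omega
        have hj1 : j + 1 = 0 := by
          have hv : (j + 1).val = 0 := by
            rw [ZMod.val_add, ZMod.val_one, hjtop]
            have h2 : 2 * n - 1 + 1 = 2 * n := by omega
            rw [h2, Nat.mod_self]
          exact (ZMod.val_eq_zero _).mp hv
        rw [hj1]
        have hdrop : w.drop j.val = [w[j.val]'(hwj j)] := by
          rw [List.drop_eq_getElem_cons (hwj j)]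
          have h2 : j.val + 1 = w.length := by omega
          rw [h2, List.drop_length]
        rw [hdrop, wprod_singleton]
        simp only [ZMod.val_zero, List.drop_zero]
        rw [hx]
    have halt : ∀ j : ZMod (2 * n),
        (Even j → R₁ (f j) (f (j + 1))) ∧ (¬ Even j → R₂ (f j) (f (j + 1))) := by
      intro j
      have hpar := even_zmod hn j
      have htyj : ty (w[j.val]'(hwj j)) = if Even j.val then true else false := by
        rw [alt_ty hred.2 (hwj j) h0, hhead h0]
        by_cases he : Even j.val <;> simp [he]
      constructor
      · intro hje
        have hjev : Even j.val := hpar.mp hje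
        have hty1 : ty (w[j.val]'(hwj j)) = true := by rw [htyj]; simp [hjev]
        obtain ⟨a, ha⟩ : ∃ a, w[j.val]'(hwj j) = Sum.inl a := by
          cases hcase : w[j.val]'(hwj j) with
          | inl a => exact ⟨a, rfl⟩
          | inr b => rw [hcase] at hty1; exact absurd hty1 (by simp [ty])
        have hk := hkey j
        rw [ha] at hk
        have hk' : α₁ a (f (j + 1)) = f j := by
          simpa [hact, toC, Monoid.Coprod.lift_apply_inl] using hk
        rw [horb₁]
        refine ⟨a⁻¹, ?_⟩
        rw [map_inv, ← hk']
        exact Equiv.symm_apply_apply _ _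
      · intro hje
        have hjov : ¬ Even j.val := fun h => hje (hpar.mpr h)
        have hty2 : ty (w[j.val]'(hwj j)) = false := by rw [htyj]; simp [hjov]
        obtain ⟨b, hb⟩ : ∃ b, w[j.val]'(hwj j) = Sum.inr b := by
          cases hcase : w[j.val]'(hwj j) with
          | inl a => rw [hcase] at hty2; exact absurd hty2 (by simp [ty])
          | inr b => exact ⟨b, rfl⟩
        have hk := hkey j
        rw [hb] at hk
        have hk' : α₂ b (f (j + 1)) = f j := by
          simpa [hact, toC, Monoid.Coprod.lift_apply_inr] using hk
        rw [horb₂]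
        refine ⟨b⁻¹, ?_⟩
        rw [map_inv, ← hk']
        exact Equiv.symm_apply_apply _ _
    obtain ⟨j, hj⟩ := hPx f hf0 halt
    refine Set.mem_iUnion.mpr ⟨j, ?_⟩
    simp only [hN, Set.mem_preimage, Set.mem_setOf_eq]
    have hfe : act (wprod (w.drop (j + 1).val)) x = f (j + 1) := rfl
    rw [hfe, hkey j, hj]
  have hle : μ {x | act (wprod w) x = x} ≤ μ (B ∪ ⋃ j, N j) := measure_mono hsub
  rw [measure_union_null hBnull (measure_iUnion_null hNnull)] at hle
  exact le_antisymm hle zero_le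

lemma free_red {R₁ R₂ : X → X → Prop}
    (horb₁ : ∀ x y, R₁ x y ↔ ∃ g : Γ₁, α₁ g x = y)
    (horb₂ : ∀ x y, R₂ x y ↔ ∃ g : Γ₂, α₂ g x = y)
    (hmp₁ : ∀ g : Γ₁, MeasurePreserving (α₁ g) μ μ)
    (hmp₂ : ∀ g : Γ₂, MeasurePreserving (α₂ g) μ μ)
    (hfree₁ : ∀ g : Γ₁, g ≠ 1 → μ {x | α₁ g x = x} = 0)
    (hfree₂ : ∀ g : Γ₂, g ≠ 1 → μ {x | α₂ g x = x} = 0)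
    (hsplit2 : ∀ n : ℕ, 0 < n → ∀ᵐ x ∂μ,
      ∀ f : ZMod (2 * n) → X, f 0 = x →
        (∀ j : ZMod (2 * n),
          (Even j → R₁ (f j) (f (j + 1))) ∧ (¬ Even j → R₂ (f j) (f (j + 1)))) →
        ∃ j : ZMod (2 * n), f j = f (j + 1)) :
    ∀ (m : ℕ) (w : List (Γ₁ ⊕ Γ₂)), w.length ≤ m → Red w → w ≠ [] →
      μ {x | Monoid.Coprod.lift α₁ α₂ (wprod w) x = x} = 0 := by
  intro m
  induction m with
  | zero =>
      intro w hlen hred hne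
      cases w with
      | nil => exact absurd rfl hne
      | cons c t => simp at hlen
  | succ m ih =>
      intro w hlen hred hne
      by_cases heven : Even w.length
      · -- even length
        have h0 : 0 < w.length := List.length_pos_iff.mpr hne
        obtain ⟨n, hn2⟩ : ∃ n, w.length = 2 * n := by
          obtain ⟨k, hk⟩ := heven; exact ⟨k, by omega⟩
        have hn : 0 < n := by omega
        by_cases hty0 : ty (w[0]'h0) = true
        · exact free_even α₁ α₂ horb₁ horb₂ hmp₁ hmp₂ hfree₁ hfree₂ hn
            (hsplit2 n hn) hn2 hred (fun _ => hty0)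
        · -- pass to the inverse word
          have hty0' : ty (w[0]'h0) = false := by
            cases h : ty (w[0]'h0)
            · rfl
            · exact absurd h hty0
          set wi := (w.map linv).reverse with hwi
          have hlwi : wi.length = w.length := by simp [hwi]
          have h0i : 0 < wi.length := by omega
          have hredwi : Red wi := by
            constructor
            · intro l hl
              simp only [hwi, List.mem_reverse, List.mem_map] at hl
              obtain ⟨a, ha, rfl⟩ := hl
              exact ntl_linv (hred.1 a ha)
            · simp only [List.Chain']
              rw [hwi, List.isChain_reverse]
              have hmapped : (w.map linv).Chain' (fun a b => ty a ≠ ty b) := by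
                simp only [List.Chain']
                rw [List.isChain_map]
                refine hred.2.imp ?_
                intro a b hab
                rwa [ty_linv, ty_linv]
              exact hmapped.imp (fun a b hab => Ne.symm hab)
          have hheadwi : ∀ (h : 0 < wi.length), ty (wi[0]'h) = true := by
            intro h
            have hidx : wi[0]'h = linv (w[w.length - 1]'(by omega)) := by
              simp only [hwi, List.getElem_reverse, List.length_map, Nat.sub_zero,
                List.getElem_map]
            rw [hidx, ty_linv]
            rw [alt_ty hred.2 (by omega) h0, hty0']
            have hodd : ¬ Even (w.length - 1) := by
              rcases Nat.even_or_odd (w.length - 1) with he | ho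
              · obtain ⟨k, hk⟩ := he
                obtain ⟨k', hk'⟩ := heven
                intro _
                omega
              · intro hcon
                rw [Nat.even_iff] at hcon
                rw [Nat.odd_iff] at ho
                omega
            simp [hodd]
          have hprod : wprod wi = (wprod w)⁻¹ := wprod_reverse_linv w
          have hfix : {x | Monoid.Coprod.lift α₁ α₂ (wprod w) x = x}
              = {x | Monoid.Coprod.lift α₁ α₂ (wprod wi) x = x} := by
            ext x
            simp only [Set.mem_setOf_eq, hprod, map_inv]
            constructor
            · intro h
              nth_rewrite 1 [← h]
              exact Equiv.symm_apply_apply _ _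
            · intro h
              have h2 := congrArg (⇑(Monoid.Coprod.lift α₁ α₂ (wprod w))) h
              rw [Equiv.Perm.coe_inv, Equiv.apply_symm_apply] at h2
              exact h2.symm
          rw [hfix]
          exact free_even α₁ α₂ horb₁ horb₂ hmp₁ hmp₂ hfree₁ hfree₂ hn
            (hsplit2 n hn) (by omega) hredwi hheadwi
      · -- odd length
        cases w with
        | nil => exact absurd rfl hne
        | cons c t =>
          cases t with
          | nil =>
              rw [wprod_singleton]
              exact fix_letter_null α₁ α₂ hfree₁ hfree₂
                (hred.1 c (List.mem_cons_self))
          | cons c₁ t₁ =>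
            set t : List (Γ₁ ⊕ Γ₂) := c₁ :: t₁ with ht
            have htne : t ≠ [] := by simp [ht]
            have hwne : (c :: t) ≠ [] := by simp
            have h0w : 0 < (c :: t).length := by simp
            have hiw : (c :: t).length - 1 < (c :: t).length := by simp
            set d := t.getLast htne with hd
            set t' := t.dropLast with ht'
            have htdec : t' ++ [d] = t := List.dropLast_append_getLast htne
            have hEvlast : Even ((c :: t).length - 1) := by
              rcases Nat.even_or_odd ((c :: t).length - 1) with he | ho
              · exact he
              · exfalso
                apply heven
                rw [Nat.odd_iff] at ho
                rw [Nat.even_iff]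
                have hl1 : 1 ≤ (c :: t).length := by simp
                omega
            have hlastidx : (c :: t)[(c :: t).length - 1]'hiw = d := by
              rw [← List.getLast_eq_getElem hwne, hd]
              exact List.getLast_cons htne
            have htyd : ty d = ty c := by
              have h1 := alt_ty hred.2 hiw h0w
              rw [hlastidx] at h1
              rw [h1, if_pos hEvlast]
              simp
            -- chain facts
            have hct : t.Chain' (fun a b => ty a ≠ ty b) := hred.2.tail
            have hct' : (t' ++ [d]).Chain' (fun a b => ty a ≠ ty b) := by
              rw [htdec]; exact hct
            obtain ⟨hchain_t', _, hlink⟩ := List.isChain_append.mp hct'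
            have hmem_t' : ∀ l ∈ t', ntl l := by
              intro l hl
              refine hred.1 l (List.mem_cons_of_mem c ?_)
              rw [← htdec]
              exact List.mem_append_left _ hl
            set e := merge d c with he
            have htye : ty e = ty d := ty_merge d c
            have hWdef : ∃ W : List (Γ₁ ⊕ Γ₂), W.length ≤ m ∧ Red W ∧ W ≠ [] ∧
                wprod W = (toC c)⁻¹ * wprod (c :: t) * toC c := by
              have hwt : wprod (c :: t) = toC c * (wprod t' * toC d) := by
                rw [wprod_cons, ← htdec, wprod_append, wprod_singleton]
              have hconj : (toC c)⁻¹ * wprod (c :: t) * toC c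
                  = wprod t' * (toC d * toC c) := by
                rw [hwt]
                group
              by_cases hntl : ntl e
              · refine ⟨t' ++ [e], ?_, ⟨?_, ?_⟩, by simp, ?_⟩
                · have hlt : t'.length = t.length - 1 := by simp [ht']
                  have hlw : (c :: t).length = t.length + 1 := by simp
                  have htpos : 0 < t.length := List.length_pos_iff.mpr htne
                  simp only [List.length_append, List.length_singleton]
                  omega
                · intro l hl
                  rcases List.mem_append.mp hl with hl | hl
                  · exact hmem_t' l hl
                  · rw [List.mem_singleton] at hl
                    rwa [hl]
                · simp only [List.Chain']
                  rw [List.isChain_append]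
                  refine ⟨hchain_t', List.isChain_singleton _, ?_⟩
                  intro x hx y hy
                  simp only [List.head?_cons, Option.mem_def, Option.some.injEq] at hy
                  rw [← hy] at *
                  rw [htye]
                  exact hlink x hx d (by simp)
                · rw [hconj, wprod_append, wprod_singleton, toC_merge htyd]
              · refine ⟨t', ?_, ⟨hmem_t', hchain_t'⟩, ?_, ?_⟩
                · have hlt : t'.length = t.length - 1 := by simp [ht']
                  have hlw : (c :: t).length = t.length + 1 := by simp
                  have htpos : 0 < t.length := List.length_pos_iff.mpr htne
                  omega
                · -- t' nonempty since t.length ≥ 2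
                  have hteven : Even t.length := by
                    have hlw : (c :: t).length = t.length + 1 := by simp
                    rcases Nat.even_or_odd t.length with he2 | ho2
                    · exact he2
                    · exfalso
                      apply heven
                      rw [Nat.odd_iff] at ho2
                      rw [Nat.even_iff]
                      omega
                  have htpos : 0 < t.length := List.length_pos_iff.mpr htne
                  have ht2 : 2 ≤ t.length := by
                    rcases hteven with ⟨k, hk⟩
                    omega
                  have : 0 < t'.length := by
                    have : t'.length = t.length - 1 := by simp [ht']
                    omega
                  exact List.length_pos_iff.mp this
                · rw [hconj, ← toC_merge htyd, ← he, toC_one hntl, mul_one]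
            obtain ⟨W, hWlen, hWred, hWne, hWprod⟩ := hWdef
            have ihW := ih W hWlen hWred hWne
            have hset : {x | Monoid.Coprod.lift α₁ α₂ (wprod (c :: t)) x = x}
                = (⇑(Monoid.Coprod.lift α₁ α₂ ((toC c)⁻¹))) ⁻¹'
                  {x | Monoid.Coprod.lift α₁ α₂ (wprod W) x = x} := by
              ext x
              simp only [Set.mem_preimage, Set.mem_setOf_eq, hWprod, map_mul, map_inv,
                Equiv.Perm.mul_apply]
              rw [Equiv.Perm.coe_inv, Equiv.apply_symm_apply]
              constructor
              · intro h
                rw [h]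
              · intro h
                exact (Equiv.injective _) h
            rw [hset]
            exact Measure.preimage_null_of_map_null
              (mp_all α₁ α₂ hmp₁ hmp₂ _).measurable.aemeasurable
              (by rw [(mp_all α₁ α₂ hmp₁ hmp₂ _).map_eq]; exact ihW)

end FPFree

/-- If `R = R₁ * R₂` is a free product of equivalence relations and `R_i` is the
orbit relation of an essentially free measure-preserving action of `Γ_i`, then
the induced action of the free product `Γ₁ ∗ Γ₂` has orbit relation `R` and is
essentially free. -/



theorem freeProductRel_induced_action
    (X : Type) [MeasurableSpace X] (μ : Measure X) [IsProbabilityMeasure μ]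
    (R R₁ R₂ : X → X → Prop) (hR : Equivalence R)
    (hsplit : FreeProductRel μ R R₁ R₂)
    (Γ₁ Γ₂ : Type) [Group Γ₁] [Countable Γ₁] [Group Γ₂] [Countable Γ₂]
    (α₁ : Γ₁ →* Equiv.Perm X) (α₂ : Γ₂ →* Equiv.Perm X)
    (hmp₁ : ∀ g : Γ₁, MeasurePreserving (α₁ g) μ μ)
    (hmp₂ : ∀ g : Γ₂, MeasurePreserving (α₂ g) μ μ)
    (hfree₁ : ∀ g : Γ₁, g ≠ 1 → μ {x | α₁ g x = x} = 0)
    (hfree₂ : ∀ g : Γ₂, g ≠ 1 → μ {x | α₂ g x = x} = 0)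
    (horb₁ : ∀ x y, R₁ x y ↔ ∃ g : Γ₁, α₁ g x = y)
    (horb₂ : ∀ x y, R₂ x y ↔ ∃ g : Γ₂, α₂ g x = y) :
    (∀ x y, R x y ↔ ∃ g : Monoid.Coprod Γ₁ Γ₂, Monoid.Coprod.lift α₁ α₂ g x = y) ∧
    (∀ g : Monoid.Coprod Γ₁ Γ₂, g ≠ 1 →
      μ {x | Monoid.Coprod.lift α₁ α₂ g x = x} = 0) := by
  classical
  constructor
  · intro x y
    constructor
    · intro hxy
      have h := (hsplit.1 x y).mp hxy
      clear hxy
      induction h with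
      | rel a b hab =>
          rcases hab with h1 | h2
          · obtain ⟨g, hg⟩ := (horb₁ a b).mp h1
            refine ⟨Monoid.Coprod.inl g, ?_⟩
            rw [Monoid.Coprod.lift_apply_inl]
            exact hg
          · obtain ⟨g, hg⟩ := (horb₂ a b).mp h2
            refine ⟨Monoid.Coprod.inr g, ?_⟩
            rw [Monoid.Coprod.lift_apply_inr]
            exact hg
      | refl a => exact ⟨1, by simp⟩
      | symm a b hab ihab =>
          obtain ⟨g, hg⟩ := ihab
          refine ⟨g⁻¹, ?_⟩
          rw [map_inv, ← hg, Equiv.Perm.coe_inv, Equiv.symm_apply_apply]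
      | trans a b c hab hbc ih1 ih2 =>
          obtain ⟨g, hg⟩ := ih1
          obtain ⟨g', hg'⟩ := ih2
          refine ⟨g' * g, ?_⟩
          rw [map_mul, Equiv.Perm.mul_apply, hg, hg']
    · rintro ⟨g, rfl⟩
      have key : ∀ (g : Monoid.Coprod Γ₁ Γ₂) (z : X),
          R z (Monoid.Coprod.lift α₁ α₂ g z) := by
        intro g
        induction g using Monoid.Coprod.induction_on with
        | inl a =>
            intro z
            apply (hsplit.1 _ _).mpr
            refine Relation.EqvGen.rel _ _ (Or.inl ((horb₁ z _).mpr ⟨a, ?_⟩))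
            rw [Monoid.Coprod.lift_apply_inl]
        | inr b =>
            intro z
            apply (hsplit.1 _ _).mpr
            refine Relation.EqvGen.rel _ _ (Or.inr ((horb₂ z _).mpr ⟨b, ?_⟩))
            rw [Monoid.Coprod.lift_apply_inr]
        | mul u v hu hv =>
            intro z
            have h1 := hv z
            have h2 := hu (Monoid.Coprod.lift α₁ α₂ v z)
            have h3 := hR.trans h1 h2
            rw [map_mul, Equiv.Perm.mul_apply]
            exact h3
      exact key g x
  · intro g hg
    obtain ⟨w, hred, hwp⟩ := FPFree.exists_red g
    have hne : w ≠ [] := by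
      rintro rfl
      exact hg (hwp.symm.trans FPFree.wprod_nil)
    rw [← hwp]
    exact FPFree.free_red α₁ α₂ horb₁ horb₂ hmp₁ hmp₂ hfree₁ hfree₂ hsplit.2
      w.length w le_rfl hred hne
end

section
/- Let Γ be a countable group with subgroups D ≤ E where D and E are infinite cyclic and D is a proper subgroup of E of index k ≥ 3. Then in the iterated amalgamated free product Γ *_D Γ *_D Γ (three copies of Γ amalgamated over the copies of D via the identity), the subgroup generated by the three copies of E is isomorphic to E *_D E *_D E, which is a nonamenable group. -/
def AmenableGroup (G : Type) [Group G] : Prop :=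
  ∃ m : Set G → ℝ,
    (∀ s, 0 ≤ m s) ∧ m Set.univ = 1 ∧
    (∀ s t, Disjoint s t → m (s ∪ t) = m s + m t) ∧
    (∀ (g : G) (s : Set G), m ((fun x => g * x) '' s) = m s)

open Monoid

private lemma meas_mono {G : Type} [Group G] {m : Set G → ℝ}
    (h0 : ∀ s, 0 ≤ m s) (hadd : ∀ s t, Disjoint s t → m (s ∪ t) = m s + m t)
    {s t : Set G} (hst : s ⊆ t) : m s ≤ m t := by
  have h1 := hadd s (t \ s) Set.disjoint_sdiff_right
  rw [Set.union_diff_cancel hst] at h1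
  have h2 := h0 (t \ s)
  linarith

private lemma amenable_of_surjective {G H : Type} [Group G] [Group H] (f : G →* H)
    (hf : Function.Surjective f) (hG : AmenableGroup G) : AmenableGroup H := by
  obtain ⟨m, h0, huniv, hadd, hinv⟩ := hG
  refine ⟨fun s => m (f ⁻¹' s), fun s => h0 _, by simpa using huniv, ?_, ?_⟩
  · intro s t hst
    show m (f ⁻¹' (s ∪ t)) = m (f ⁻¹' s) + m (f ⁻¹' t)
    rw [Set.preimage_union]
    exact hadd _ _ (hst.preimage f)
  · intro h s
    obtain ⟨g, rfl⟩ := hf h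
    have key : f ⁻¹' ((fun x => f g * x) '' s) = (fun x => g * x) '' (f ⁻¹' s) := by
      ext x
      simp only [Set.mem_preimage, Set.mem_image]
      constructor
      · rintro ⟨y, hy, hxy⟩
        refine ⟨g⁻¹ * x, ?_, by simp⟩
        simpa [map_mul, ← hxy] using hy
      · rintro ⟨z, hz, rfl⟩
        exact ⟨f z, hz, by simp [map_mul]⟩
    show m (f ⁻¹' ((fun x => f g * x) '' s)) = m (f ⁻¹' s)
    rw [key, hinv]

private lemma not_amenable_coprodI (C : Type) [Group C] [Nontrivial C] :
    ¬ AmenableGroup (Monoid.CoprodI (fun _ : Fin 3 => C)) := by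
  classical
  rintro ⟨m, h0, huniv, hadd, hinv⟩
  obtain ⟨c, hc⟩ := exists_ne (1 : C)
  let A : Fin 3 → Set (CoprodI (fun _ : Fin 3 => C)) :=
    fun i => {x | (CoprodI.Word.equiv x).fstIdx = some i}
  have hkey : ∀ (i : Fin 3) (x), x ∉ A i →
      (CoprodI.of (M := fun _ : Fin 3 => C) (i := i) c) * x ∈ A i := by
    intro i x hx
    have hfst : (CoprodI.Word.equiv x).fstIdx ≠ some i := hx
    have heq : CoprodI.Word.equiv ((CoprodI.of (M := fun _ : Fin 3 => C) (i := i) c) * x)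
        = CoprodI.of (M := fun _ : Fin 3 => C) (i := i) c • CoprodI.Word.equiv x :=
      by
        show (CoprodI.of (M := fun _ : Fin 3 => C) (i := i) c * x) •
            (CoprodI.Word.empty : CoprodI.Word (fun _ : Fin 3 => C)) =
          CoprodI.of (M := fun _ : Fin 3 => C) (i := i) c •
            (x • (CoprodI.Word.empty : CoprodI.Word (fun _ : Fin 3 => C)))
        exact mul_smul (CoprodI.of (M := fun _ : Fin 3 => C) (i := i) c) x CoprodI.Word.empty
    show (CoprodI.Word.equiv ((CoprodI.of (M := fun _ : Fin 3 => C) (i := i) c) * x)).fstIdx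
        = some i
    rw [heq, ← CoprodI.Word.cons_eq_smul (m := c) (ls := CoprodI.Word.equiv x)
      (h1 := hfst) (h2 := hc), CoprodI.Word.fstIdx_cons]
  have hge : ∀ i : Fin 3, 1 - m (A i) ≤ m (A i) := by
    intro i
    have himg : (fun x => CoprodI.of (M := fun _ : Fin 3 => C) (i := i) c * x) '' (A i)ᶜ ⊆ A i := by
      rintro _ ⟨x, hx, rfl⟩
      exact hkey i x hx
    have h1 := hinv (CoprodI.of (M := fun _ : Fin 3 => C) (i := i) c) (A i)ᶜ
    have h2 : m ((fun x => CoprodI.of (M := fun _ : Fin 3 => C) (i := i) c * x) '' (A i)ᶜ)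
        ≤ m (A i) := meas_mono h0 hadd himg
    have h3 : m (A i) + m (A i)ᶜ = 1 := by
      have := hadd (A i) (A i)ᶜ disjoint_compl_right
      rw [Set.union_compl_self, huniv] at this
      linarith
    linarith
  have hdisj : ∀ i j : Fin 3, i ≠ j → Disjoint (A i) (A j) := by
    intro i j hij
    rw [Set.disjoint_left]
    intro x hxi hxj
    have : some i = some j := hxi.symm.trans hxj
    simp_all
  have hsum : m (A 0 ∪ A 1 ∪ A 2) = m (A 0) + m (A 1) + m (A 2) := by
    rw [hadd _ _ (by
      refine Set.disjoint_union_left.mpr ⟨hdisj 0 2 (by decide), hdisj 1 2 (by decide)⟩),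
      hadd _ _ (hdisj 0 1 (by decide))]
  have hle : m (A 0 ∪ A 1 ∪ A 2) ≤ 1 := by
    rw [← huniv]
    exact meas_mono h0 hadd (Set.subset_univ _)
  have g0 := hge 0
  have g1 := hge 1
  have g2 := hge 2
  linarith
open Monoid Monoid.PushoutI in
/-- The canonical homomorphism `E *_D E *_D E →* Γ *_D Γ *_D Γ`. -/
private def fmap {Γ : Type} [Group Γ] (D E : Subgroup Γ) (hDE : D ≤ E) :
    PushoutI (fun _ : Fin 3 => Subgroup.inclusion hDE) →*
      PushoutI (fun _ : Fin 3 => D.subtype) :=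
  PushoutI.lift (fun i => (PushoutI.of (φ := fun _ : Fin 3 => D.subtype) i).comp E.subtype)
    (PushoutI.base (fun _ : Fin 3 => D.subtype))
    (fun i => by
      rw [MonoidHom.comp_assoc, Subgroup.subtype_comp_inclusion, of_comp_eq_base])

open Monoid Monoid.PushoutI in
private lemma fmap_of {Γ : Type} [Group Γ] (D E : Subgroup Γ) (hDE : D ≤ E)
    (i : Fin 3) (x : ↥E) :
    fmap D E hDE (PushoutI.of (φ := fun _ : Fin 3 => Subgroup.inclusion hDE) i x) =
      PushoutI.of (φ := fun _ : Fin 3 => D.subtype) i (x : Γ) := by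
  rw [fmap, PushoutI.lift_of]
  rfl

open Monoid Monoid.PushoutI in
private lemma fmap_base {Γ : Type} [Group Γ] (D E : Subgroup Γ) (hDE : D ≤ E) (h : ↥D) :
    fmap D E hDE (PushoutI.base (fun _ : Fin 3 => Subgroup.inclusion hDE) h) =
      PushoutI.base (fun _ : Fin 3 => D.subtype) h := by
  rw [fmap, PushoutI.lift_base]

open Monoid Monoid.PushoutI in
private lemma fmap_injective {Γ : Type} [Group Γ] (D E : Subgroup Γ) (hDE : D ≤ E) :
    Function.Injective (fmap D E hDE) := by
  classical
  have hφSinj : ∀ i : Fin 3, Function.Injective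
      ((fun _ : Fin 3 => Subgroup.inclusion hDE) i) :=
    fun _ => Subgroup.inclusion_injective hDE
  have hφBinj : ∀ i : Fin 3, Function.Injective
      ((fun _ : Fin 3 => D.subtype) i) :=
    fun _ => D.subtype_injective
  rw [injective_iff_map_eq_one]
  intro g hg
  obtain ⟨d⟩ := NormalWord.transversal_nonempty (fun _ : Fin 3 => Subgroup.inclusion hDE) hφSinj
  let w : NormalWord d := g • NormalWord.empty
  have hgprod : w.prod = g := by
    rw [NormalWord.prod_smul, NormalWord.prod_empty, mul_one]
  -- nontrivial transversal elements are not in the image of `D`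
  have htrans : ∀ (i : Fin 3) (x : ↥E), x ∈ d.set i → x ≠ 1 →
      x ∉ (Subgroup.inclusion hDE : ↥D →* ↥E).range := by
    rintro i x hx hx1 hxr
    apply hx1
    have hpair :
        ((⟨⟨x, hxr⟩, ⟨1, d.one_mem i⟩⟩ :
          ((Subgroup.inclusion hDE : ↥D →* ↥E).range : Set ↥E) × (d.set i))) =
        ⟨⟨1, Subgroup.one_mem _⟩, ⟨x, hx⟩⟩ :=
      (d.compl i).1 (by simp)
    simpa using (congrArg (fun z => (z.2 : ↥E)) hpair).symm
  -- the image of the underlying word, as a word over `Γ`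
  let WB : CoprodI.Word (fun _ : Fin 3 => Γ) :=
    { toList := w.toList.map (fun p => ⟨p.1, (p.2 : Γ)⟩),
      ne_one := by
        intro l hl
        simp only [List.mem_map] at hl
        obtain ⟨p, hp, rfl⟩ := hl
        exact fun h => w.ne_one p hp (Subtype.ext h)
      chain_ne := by
        rw [List.isChain_map]
        exact w.chain_ne.imp (fun _ _ h => h) }
  have hred : PushoutI.Reduced (fun _ : Fin 3 => D.subtype) WB := by
    intro p hp
    simp only [WB, List.mem_map] at hp
    obtain ⟨q, hq, rfl⟩ := hp
    rintro ⟨y, hy⟩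
    refine htrans q.1 q.2 (w.normalized q.1 q.2 hq) (w.ne_one q hq) ⟨y, ?_⟩
    exact Subtype.ext hy
  have hXeq : fmap D E hDE (ofCoprodI w.toWord.prod) = ofCoprodI WB.prod := by
    simp only [CoprodI.Word.prod, map_list_prod, List.map_map]
    simp only [WB, List.map_map]
    rfl
  have hfw : PushoutI.base (fun _ : Fin 3 => D.subtype) w.head *
      fmap D E hDE (ofCoprodI w.toWord.prod) = 1 := by
    have h1 : fmap D E hDE w.prod = 1 := by rw [hgprod]; exact hg
    rwa [NormalWord.prod, map_mul, fmap_base] at h1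
  have hmem : ofCoprodI WB.prod ∈
      (PushoutI.base (fun _ : Fin 3 => D.subtype)).range := by
    rw [← hXeq]
    exact ⟨w.head⁻¹, by rw [map_inv, eq_inv_of_mul_eq_one_left hfw, inv_inv]⟩
  have hWB : WB = CoprodI.Word.empty :=
    PushoutI.Reduced.eq_empty_of_mem_range hφBinj hred hmem
  have hL : w.toList = [] := by
    have h2 := congrArg CoprodI.Word.toList hWB
    simpa [WB, CoprodI.Word.empty] using h2
  have hword : w.toWord = CoprodI.Word.empty := CoprodI.Word.ext hL
  have hgbase : g = PushoutI.base (fun _ : Fin 3 => Subgroup.inclusion hDE) w.head := by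
    rw [← hgprod, NormalWord.prod, hword, CoprodI.Word.prod_empty, map_one, mul_one]
  have hhead : w.head = 1 := by
    apply PushoutI.base_injective hφBinj
    rw [map_one]
    have h3 : fmap D E hDE g = 1 := hg
    rwa [hgbase, fmap_base] at h3
  rw [hgbase, hhead, map_one]

open Monoid Monoid.PushoutI in
/-- The quotient map `E *_D E *_D E →* C * C * C` where `C = E / D`. -/
private def psimap {Γ : Type} [Group Γ] (D E : Subgroup Γ) (hDE : D ≤ E)
    [hN : (D.subgroupOf E).Normal] :
    PushoutI (fun _ : Fin 3 => Subgroup.inclusion hDE) →*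
      CoprodI (fun _ : Fin 3 => ↥E ⧸ D.subgroupOf E) :=
  PushoutI.lift
    (fun i => (CoprodI.of (M := fun _ : Fin 3 => ↥E ⧸ D.subgroupOf E) (i := i)).comp
      (QuotientGroup.mk' (D.subgroupOf E))) 1
    (fun i => by
      ext x
      have h1 : ((Subgroup.inclusion hDE x : ↥E) : ↥E ⧸ D.subgroupOf E) = 1 :=
        (QuotientGroup.eq_one_iff _).mpr (by simpa [Subgroup.mem_subgroupOf] using x.2)
      simp [h1])

open Monoid Monoid.PushoutI in
private lemma psimap_surjective {Γ : Type} [Group Γ] (D E : Subgroup Γ) (hDE : D ≤ E)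
    [hN : (D.subgroupOf E).Normal] :
    Function.Surjective (psimap D E hDE) := by
  intro y
  induction y using CoprodI.induction_on with
  | one => exact ⟨1, map_one _⟩
  | of i m =>
    obtain ⟨x, rfl⟩ := QuotientGroup.mk'_surjective (D.subgroupOf E) m
    refine ⟨PushoutI.of i x, ?_⟩
    rw [psimap, PushoutI.lift_of]
    rfl
  | mul x y hx hy =>
    obtain ⟨a, rfl⟩ := hx
    obtain ⟨b, rfl⟩ := hy
    exact ⟨a * b, map_mul _ a b⟩

set_option maxHeartbeats 1000000 in
open Monoid Monoid.PushoutI in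
/-- Let `D ≤ E ≤ Γ` with `D`, `E` infinite cyclic and `D` of index `k ≥ 3` in
`E`. In the iterated amalgamated free product `Γ *_D Γ *_D Γ` (three copies of
`Γ` amalgamated along the identity over `D`), the subgroup generated by the
three copies of `E` is isomorphic to `E *_D E *_D E`, which is nonamenable. -/
theorem amalgam_copies_of_E_nonamenable
    (Γ : Type) [Group Γ] [Countable Γ] (D E : Subgroup Γ) (hDE : D ≤ E)
    (hDcyc : IsCyclic ↥D) (hDinf : Infinite ↥D)
    (hEcyc : IsCyclic ↥E) (hEinf : Infinite ↥E)
    (k : ℕ) (hk : 3 ≤ k) (hindex : D.relIndex E = k) :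
    ∃ e : Monoid.PushoutI (fun _ : Fin 3 => Subgroup.inclusion hDE) ≃*
        ↥(⨆ i : Fin 3, Subgroup.map
            (Monoid.PushoutI.of (φ := fun _ : Fin 3 => D.subtype) i) E),
      (∀ (i : Fin 3) (x : ↥E),
        ((e (Monoid.PushoutI.of
              (φ := fun _ : Fin 3 => Subgroup.inclusion hDE) i x) :
            Monoid.PushoutI (fun _ : Fin 3 => D.subtype)) =
          Monoid.PushoutI.of (φ := fun _ : Fin 3 => D.subtype) i (x : Γ))) ∧
      ¬ AmenableGroup
          (Monoid.PushoutI (fun _ : Fin 3 => Subgroup.inclusion hDE)) := by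
  classical
  have hmemS : ∀ x, fmap D E hDE x ∈ ⨆ i : Fin 3, Subgroup.map
      (Monoid.PushoutI.of (φ := fun _ : Fin 3 => D.subtype) i) E := by
    intro x
    induction x using PushoutI.induction_on with
    | of i g =>
      rw [fmap_of]
      exact Subgroup.mem_iSup_of_mem i ⟨(g : Γ), g.2, rfl⟩
    | base h =>
      rw [fmap_base, ← of_apply_eq_base (fun _ : Fin 3 => D.subtype) 0 h]
      exact Subgroup.mem_iSup_of_mem 0 ⟨((h : Γ)), hDE h.2, rfl⟩
    | mul x y hx hy =>
      rw [map_mul]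
      exact Subgroup.mul_mem _ hx hy
  have hSle : (⨆ i : Fin 3, Subgroup.map
      (Monoid.PushoutI.of (φ := fun _ : Fin 3 => D.subtype) i) E) ≤ (fmap D E hDE).range := by
    refine iSup_le fun i => ?_
    rintro y hy
    obtain ⟨x, hx, rfl⟩ := hy
    exact ⟨PushoutI.of i (⟨x, hx⟩ : ↥E), fmap_of D E hDE i ⟨x, hx⟩⟩
  let f' : PushoutI (fun _ : Fin 3 => Subgroup.inclusion hDE) →*
      ↥(⨆ i : Fin 3, Subgroup.map
        (Monoid.PushoutI.of (φ := fun _ : Fin 3 => D.subtype) i) E) :=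
    (fmap D E hDE).codRestrict _ hmemS
  have hbij : Function.Bijective f' := by
    constructor
    · intro a b h
      exact fmap_injective D E hDE (congrArg Subtype.val h)
    · rintro ⟨y, hy⟩
      obtain ⟨x, hx⟩ := hSle hy
      exact ⟨x, Subtype.ext hx⟩
  -- the quotient `E / D` is commutative, normal, and nontrivial
  have hcomm : ∀ a b : ↥E, a * b = b * a := by
    haveI := hEcyc
    obtain ⟨g, hg⟩ := IsCyclic.exists_generator (α := ↥E)
    intro a b
    obtain ⟨ma, hma⟩ := Subgroup.mem_zpowers_iff.mp (hg a)
    obtain ⟨mb, hmb⟩ := Subgroup.mem_zpowers_iff.mp (hg b)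
    rw [← hma, ← hmb, ← zpow_add, ← zpow_add, add_comm]
  haveI hN : (D.subgroupOf E).Normal :=
    ⟨fun n hn g => by simpa [hcomm g n, mul_assoc] using hn⟩
  haveI hCnt : Nontrivial (↥E ⧸ D.subgroupOf E) := by
    by_contra hnt
    rw [not_nontrivial_iff_subsingleton] at hnt
    have h2 : Nat.card (↥E ⧸ D.subgroupOf E) = 1 := Nat.card_of_subsingleton 1
    have h1 : Nat.card (↥E ⧸ D.subgroupOf E) = k := hindex
    omega
  refine ⟨MulEquiv.ofBijective f' hbij, fun i x => fmap_of D E hDE i x, fun hA => ?_⟩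
  exact not_amenable_coprodI _ (amenable_of_surjective _ (psimap_surjective D E hDE) hA)
end
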